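/- Let k be an algebraically closed field, G a finite abelian group with char(k) ∤ |G| acting on a k-algebra A by algebra automorphisms (with a fixed isomorphism G ≅ G^∨), and μ a normalised 2-cocycle of G with values in kˣ. Then A is finitely generated as a k-algebra if and only if the cocycle twist A^{G,μ} is finitely generated as a k-algebra. Furthermore, if A is ℕ-graded and G acts by ℕ-graded algebra automorphisms, then A is generated as a k-algebra by its degree 1 component if and only if A^{G,μ} is. -/
import Mathlib


universe u v

/-- A normalised 2-cocycle of the group `G` with values in `kˣ`. -/
def IsCocycle {G : Type*} [Group G] {k : Type*} [Field k] (μ : G → G → kˣ) : Prop :=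
  (∀ g h l : G, μ g h * μ (g * h) l = μ g (h * l) * μ h l) ∧
    (∀ g : G, μ 1 g = 1) ∧ (∀ g : G, μ g 1 = 1)

/-- The isotypic component of the `k`-algebra `A`, under the action
`ρ` of `G` by `k`-algebra automorphisms, corresponding to the character `c : G →* kˣ`. -/
def isotypic {k A G : Type*} [Field k] [Ring A] [Algebra k A] [Group G]
    (ρ : G →* (A ≃ₐ[k] A)) (c : G →* kˣ) : Submodule k A where
  carrier := {a | ∀ h : G, ρ h a = (c h : k) • a}
  add_mem' := fun {a} {b} ha hb h => by rw [map_add, ha h, hb h, smul_add]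
  zero_mem' := fun h => by rw [map_zero, smul_zero]
  smul_mem' := fun r a ha h => by rw [map_smul, ha h, smul_comm]

/-- Given an action `ρ` of a finite abelian group `G` on `A` by `k`-algebra automorphisms
and a fixed isomorphism `χ : G ≅ G^∨` of `G` with its character group, the `G`-grading of
`A` induced by the action: `A_g` is the isotypic component of the character `χ_{g⁻¹}`. -/
def actionGrading {k A G : Type*} [Field k] [Ring A] [Algebra k A] [Group G]
    (ρ : G →* (A ≃ₐ[k] A)) (χ : G ≃* (G →* kˣ)) : G → Submodule k A :=
  fun g => isotypic ρ (χ g⁻¹)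

/-- `f : A ≃ₗ[k] B` realises the `k`-algebra `B` as the cocycle twist `A^{G,μ}` of `A`,
with respect to the `G`-grading `ℬ` of `A` and the 2-cocycle `μ`:
`f` is a `k`-linear isomorphism with `f 1 = 1` and
`f a * f b = μ g h • f (a * b)` for all homogeneous `a ∈ A_g`, `b ∈ A_h`. -/
structure IsCocycleTwist (k : Type*) [Field k] {G : Type*} [Group G]
    {A : Type*} [Ring A] [Algebra k A] {B : Type*} [Ring B] [Algebra k B]
    (ℬ : G → Submodule k A) (μ : G → G → kˣ) (f : A ≃ₗ[k] B) : Prop where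
  map_one : f 1 = 1
  map_mul : ∀ (g h : G) (a b : A), a ∈ ℬ g → b ∈ ℬ h →
    f a * f b = (μ g h : k) • f (a * b)


section Aux

open Finset

variable {k A G : Type u} [Field k] [Ring A] [Algebra k A]
  [CommGroup G] [Fintype G] [DecidableEq G]

lemma sum_char_eq_zero (χ : G ≃* (G →* kˣ)) {h : G} (hh : h ≠ 1) :
    ∑ g : G, ((χ g h : kˣ) : k) = 0 := by
  by_contra hS
  have key : ∀ g₀ : G, ((χ g₀ h : kˣ) : k) = 1 := by
    intro g₀
    have h1 : ∑ g : G, ((χ (g₀ * g) h : kˣ) : k) = ∑ g : G, ((χ g h : kˣ) : k) :=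
      Fintype.sum_equiv (Equiv.mulLeft g₀) (fun g => ((χ (g₀ * g) h : kˣ) : k))
        (fun g => ((χ g h : kˣ) : k)) (fun g => rfl)
    have h2 : ∑ g : G, ((χ (g₀ * g) h : kˣ) : k)
        = ((χ g₀ h : kˣ) : k) * ∑ g : G, ((χ g h : kˣ) : k) := by
      rw [Finset.mul_sum]
      refine Finset.sum_congr rfl fun g _ => ?_
      rw [map_mul]
      simp
    rw [h2] at h1
    exact mul_right_cancel₀ hS (by rw [h1, one_mul])
  -- separation via linear independence of characters
  have inj : Function.Injective (fun g : G => (Units.coeHom k).comp (χ g)) := by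
    intro g g' hgg'
    apply χ.injective
    ext x
    exact DFunLike.congr_fun hgg' x
  have li : LinearIndependent k (fun g : G => ((Units.coeHom k).comp (χ g) : G → k)) :=
    (linearIndependent_monoidHom G k).comp _ inj
  have hsp : Submodule.span k
      (Set.range fun g : G => ((Units.coeHom k).comp (χ g) : G → k)) = ⊤ :=
    li.span_eq_top_of_card_eq_finrank (by simp [Module.finrank_fintype_fun_eq_card])
  have hker : Submodule.span k
      (Set.range fun g : G => ((Units.coeHom k).comp (χ g) : G → k)) ≤
      LinearMap.ker ((LinearMap.proj h : (G → k) →ₗ[k] k) - LinearMap.proj 1) := by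
    rw [Submodule.span_le]
    rintro _ ⟨g, rfl⟩
    simp [LinearMap.mem_ker, key g]
  rw [hsp] at hker
  have h0 := hker (Submodule.mem_top (x := Pi.single (1 : G) (1 : k)))
  simp [LinearMap.mem_ker, Pi.single_apply, hh] at h0

variable (ρ : G →* (A ≃ₐ[k] A)) (χ : G ≃* (G →* kˣ))

lemma mem_actionGrading {g : G} {a : A} :
    a ∈ actionGrading ρ χ g ↔ ∀ h : G, ρ h a = ((χ g⁻¹ h : kˣ) : k) • a := Iff.rfl

noncomputable def component (g : G) (a : A) : A :=
  (Fintype.card G : k)⁻¹ • ∑ h : G, ((χ g h : kˣ) : k) • ρ h a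

lemma component_mem (g : G) (a : A) : component ρ χ g a ∈ actionGrading ρ χ g := by
  rw [mem_actionGrading]
  intro h'
  unfold component
  rw [map_smul, map_sum]
  have step1 : ∀ h : G, ρ h' (((χ g h : kˣ) : k) • ρ h a)
      = ((χ g h : kˣ) : k) • ρ (h' * h) a := by
    intro h
    rw [map_smul, map_mul, AlgEquiv.mul_apply]
  simp only [step1]
  have step2 : ∑ h : G, ((χ g h : kˣ) : k) • ρ (h' * h) a
      = ∑ t : G, ((χ g (h'⁻¹ * t) : kˣ) : k) • ρ t a := by
    refine Fintype.sum_equiv (Equiv.mulLeft h') _ _ fun h => ?_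
    simp [inv_mul_cancel_left]
  rw [step2]
  rw [Finset.smul_sum, Finset.smul_sum, Finset.smul_sum]
  refine Finset.sum_congr rfl fun t _ => ?_
  simp only [smul_smul]
  congr 1
  rw [map_mul, map_inv, map_inv]
  simp only [MonoidHom.inv_apply, Units.val_mul, Units.val_inv_eq_inv_val]
  ring

lemma sum_component (hchar : (Fintype.card G : k) ≠ 0) (a : A) :
    ∑ g : G, component ρ χ g a = a := by
  unfold component
  rw [← Finset.smul_sum, Finset.sum_comm]
  have : ∀ h : G, ∑ g : G, ((χ g h : kˣ) : k) • ρ h a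
      = (∑ g : G, ((χ g h : kˣ) : k)) • ρ h a := fun h => (Finset.sum_smul).symm
  simp only [this]
  rw [Finset.sum_eq_single 1]
  · have : ∑ g : G, ((χ g (1 : G) : kˣ) : k) = (Fintype.card G : k) := by
      simp only [map_one, Units.val_one, Finset.sum_const, Finset.card_univ, nsmul_eq_mul,
        mul_one]
    rw [this, map_one, AlgEquiv.one_apply, smul_smul, inv_mul_cancel₀ hchar, one_smul]
  · intro h _ hh
    rw [sum_char_eq_zero χ hh, zero_smul]
  · intro h; exact absurd (Finset.mem_univ 1) h

lemma component_mem_submodule {N : Submodule k A} {a : A} (ha : ∀ h : G, ρ h a ∈ N) (g : G) :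
    component ρ χ g a ∈ N :=
  N.smul_mem _ (Submodule.sum_mem _ fun h _ => N.smul_mem _ (ha h))

lemma one_mem_actionGrading : (1 : A) ∈ actionGrading ρ χ 1 := by
  rw [mem_actionGrading]
  intro h
  simp

lemma mul_mem_actionGrading {g h : G} {a b : A}
    (ha : a ∈ actionGrading ρ χ g) (hb : b ∈ actionGrading ρ χ h) :
    a * b ∈ actionGrading ρ χ (g * h) := by
  rw [mem_actionGrading] at *
  intro l
  rw [map_mul, ha l, hb l, smul_mul_smul_comm]
  congr 1
  rw [mul_inv, map_mul]
  simp

section Twist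

variable {B : Type u} [Ring B] [Algebra k B]

lemma image_adjoin (μ : G → G → kˣ) (f : A ≃ₗ[k] B)
    (hf : IsCocycleTwist k (actionGrading ρ χ) μ f)
    {S : Set A} (hS : ∀ a ∈ S, ∃ g, a ∈ actionGrading ρ χ g) :
    (Algebra.adjoin k (f '' S) : Set B) = f '' (Algebra.adjoin k S) := by
  have hfwd : ∀ x ∈ Submonoid.closure S,
      (∃ g, x ∈ actionGrading ρ χ g) ∧ f x ∈ Algebra.adjoin k (f '' S) := by
    intro x hx
    induction hx using Submonoid.closure_induction with
    | mem s hs => exact ⟨hS s hs, Algebra.subset_adjoin ⟨s, hs, rfl⟩⟩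
    | one =>
      refine ⟨⟨1, one_mem_actionGrading ρ χ⟩, ?_⟩
      rw [hf.map_one]; exact one_mem _
    | mul x y hx hy ihx ihy =>
      obtain ⟨⟨g, hg⟩, hfx⟩ := ihx
      obtain ⟨⟨h, hh⟩, hfy⟩ := ihy
      refine ⟨⟨g * h, mul_mem_actionGrading ρ χ hg hh⟩, ?_⟩
      have hne : ((μ g h : kˣ) : k) ≠ 0 := Units.ne_zero _
      have heq : f (x * y) = (((μ g h : kˣ) : k))⁻¹ • (f x * f y) :=
        ((inv_smul_eq_iff₀ hne).2 (hf.map_mul g h x y hg hh)).symm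
      rw [heq]
      exact Subalgebra.smul_mem _ (mul_mem hfx hfy) _
  have h1 : f '' (Algebra.adjoin k S : Set A) ⊆ (Algebra.adjoin k (f '' S) : Set B) := by
    rintro _ ⟨x, hx, rfl⟩
    have hx' : x ∈ Submodule.span k ((Submonoid.closure S : Submonoid A) : Set A) := by
      rw [← Algebra.adjoin_eq_span]; exact hx
    clear hx
    induction hx' using Submodule.span_induction with
    | mem x hxc => exact (hfwd x hxc).2
    | zero => rw [map_zero]; exact zero_mem _
    | add x y _ _ ihx ihy => rw [map_add]; exact add_mem ihx ihy
    | smul c x _ ih => rw [map_smul]; exact Subalgebra.smul_mem _ ih c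
  have hbwd : ∀ y ∈ Submonoid.closure (f '' S),
      ∃ x, (x ∈ Algebra.adjoin k S ∧ ∃ g, x ∈ actionGrading ρ χ g) ∧ f x = y := by
    intro y hy
    induction hy using Submonoid.closure_induction with
    | mem y hy =>
      obtain ⟨s, hs, rfl⟩ := hy
      exact ⟨s, ⟨Algebra.subset_adjoin hs, hS s hs⟩, rfl⟩
    | one => exact ⟨1, ⟨one_mem _, 1, one_mem_actionGrading ρ χ⟩, hf.map_one⟩
    | mul y z hy hz ihy ihz =>
      obtain ⟨x₁, ⟨hx₁, g, hg⟩, rfl⟩ := ihy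
      obtain ⟨x₂, ⟨hx₂, h, hh⟩, rfl⟩ := ihz
      refine ⟨((μ g h : kˣ) : k) • (x₁ * x₂),
        ⟨Subalgebra.smul_mem _ (mul_mem hx₁ hx₂) _, g * h,
          Submodule.smul_mem _ _ (mul_mem_actionGrading ρ χ hg hh)⟩, ?_⟩
      rw [map_smul]
      exact (hf.map_mul g h x₁ x₂ hg hh).symm
  have h2 : (Algebra.adjoin k (f '' S) : Set B) ⊆ f '' (Algebra.adjoin k S) := by
    intro y hy
    have hy' : y ∈ Submodule.span k ((Submonoid.closure (f '' S) : Submonoid B) : Set B) := by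
      rw [← Algebra.adjoin_eq_span]; exact hy
    clear hy
    induction hy' using Submodule.span_induction with
    | mem y hyc =>
      obtain ⟨x, ⟨hx, _⟩, rfl⟩ := hbwd y hyc
      exact ⟨x, hx, rfl⟩
    | zero => exact ⟨0, zero_mem _, map_zero f⟩
    | add y z _ _ ihy ihz =>
      obtain ⟨x₁, hx₁, rfl⟩ := ihy
      obtain ⟨x₂, hx₂, rfl⟩ := ihz
      exact ⟨x₁ + x₂, add_mem hx₁ hx₂, map_add f _ _⟩
    | smul c y _ ih =>
      obtain ⟨x, hx, rfl⟩ := ih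
      exact ⟨c • x, Subalgebra.smul_mem _ hx c, map_smul f c x⟩
  exact Set.Subset.antisymm h2 h1

lemma adjoin_eq_top_iff (μ : G → G → kˣ) (f : A ≃ₗ[k] B)
    (hf : IsCocycleTwist k (actionGrading ρ χ) μ f)
    {S : Set A} (hS : ∀ a ∈ S, ∃ g, a ∈ actionGrading ρ χ g) :
    Algebra.adjoin k S = ⊤ ↔ Algebra.adjoin k (f '' S) = ⊤ := by
  have himg := image_adjoin ρ χ μ f hf hS
  constructor
  · intro h
    apply SetLike.ext'
    rw [himg, h]
    simp only [Algebra.coe_top, Set.image_univ]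
    exact Set.range_eq_univ.2 f.surjective
  · intro h
    apply SetLike.ext'
    rw [Algebra.coe_top]
    have : f '' (Algebra.adjoin k S : Set A) = Set.univ := by
      rw [← himg, h, Algebra.coe_top]
    apply Set.eq_univ_of_forall
    intro a
    have : f a ∈ f '' (Algebra.adjoin k S : Set A) := this ▸ Set.mem_univ _
    obtain ⟨x, hx, hxa⟩ := this
    rwa [← f.injective hxa]

end Twist

end Aux

/-- Under the standing hypotheses (`k` algebraically closed,
`G` finite abelian with `char k ∤ |G|` acting on `A` by algebra automorphisms, `χ` a fixed
isomorphism `G ≅ G^∨`, `μ` a normalised 2-cocycle, `B ≅ A^{G,μ}` the cocycle twist),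
`A` is finitely generated as a `k`-algebra iff `A^{G,μ}` is; and if moreover `A` is
ℕ-graded and `G` acts by ℕ-graded automorphisms, then `A` is generated in degree 1 iff
`A^{G,μ}` is generated in degree 1 (the ℕ-grading of `A^{G,μ}` being inherited from `A`). -/
theorem statement7 {k A B G : Type u} [Field k] [IsAlgClosed k] [Ring A] [Algebra k A]
    [Ring B] [Algebra k B] [CommGroup G] [Fintype G] [DecidableEq G]
    (hchar : (Fintype.card G : k) ≠ 0)
    (ρ : G →* (A ≃ₐ[k] A)) (χ : G ≃* (G →* kˣ))
    (μ : G → G → kˣ) (hμ : IsCocycle μ)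
    (f : A ≃ₗ[k] B) (hf : IsCocycleTwist k (actionGrading ρ χ) μ f) :
    (Algebra.FiniteType k A ↔ Algebra.FiniteType k B) ∧
      ∀ 𝒜 : ℕ → Submodule k A, GradedAlgebra 𝒜 →
        (∀ (g : G) (n : ℕ) (a : A), a ∈ 𝒜 n → ρ g a ∈ 𝒜 n) →
        (Algebra.adjoin k ((𝒜 1 : Submodule k A) : Set A) = ⊤ ↔
          Algebra.adjoin k (((𝒜 1).map (f : A →ₗ[k] B) : Submodule k B) : Set B) = ⊤) := by
  classical
  constructor
  · constructor
    · intro hA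
      obtain ⟨s, hs⟩ := hA.out
      set T : Finset A := (Finset.univ (α := G) ×ˢ s).image fun p => component ρ χ p.1 p.2
        with hT
      have hThom : ∀ a ∈ (T : Set A), ∃ g, a ∈ actionGrading ρ χ g := by
        intro a ha
        simp only [hT, Finset.coe_image, Set.mem_image, Finset.mem_coe,
          Finset.mem_product] at ha
        obtain ⟨⟨g, x⟩, _, rfl⟩ := ha
        exact ⟨g, component_mem ρ χ g x⟩
      have hTtop : Algebra.adjoin k (T : Set A) = ⊤ := by
        rw [eq_top_iff, ← hs]
        apply Algebra.adjoin_le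
        intro x hx
        have heq : x = ∑ g : G, component ρ χ g x := (sum_component ρ χ hchar x).symm
        rw [heq]
        refine sum_mem fun g _ => Algebra.subset_adjoin ?_
        exact Finset.mem_coe.2 (Finset.mem_image.2
          ⟨(g, x), Finset.mem_product.2 ⟨Finset.mem_univ _, hx⟩, rfl⟩)
      have htop := (adjoin_eq_top_iff ρ χ μ f hf hThom).1 hTtop
      exact ⟨T.image (fun a => f a), by rwa [Finset.coe_image]⟩
    · intro hB
      obtain ⟨t, ht⟩ := hB.out
      set T : Finset A := (Finset.univ (α := G) ×ˢ t.image fun b => f.symm b).image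
        fun p => component ρ χ p.1 p.2 with hT
      have hThom : ∀ a ∈ (T : Set A), ∃ g, a ∈ actionGrading ρ χ g := by
        intro a ha
        simp only [hT, Finset.coe_image, Set.mem_image, Finset.mem_coe,
          Finset.mem_product] at ha
        obtain ⟨⟨g, x⟩, _, rfl⟩ := ha
        exact ⟨g, component_mem ρ χ g x⟩
      have hTtop : Algebra.adjoin k (⇑f '' (T : Set A)) = ⊤ := by
        rw [eq_top_iff, ← ht]
        apply Algebra.adjoin_le
        intro b hb
        have heq : b = ∑ g : G, f (component ρ χ g (f.symm b)) := by
          rw [← map_sum, sum_component ρ χ hchar, f.apply_symm_apply]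
        rw [heq]
        refine sum_mem fun g _ => Algebra.subset_adjoin ?_
        refine ⟨component ρ χ g (f.symm b), Finset.mem_coe.2 (Finset.mem_image.2
          ⟨(g, f.symm b), Finset.mem_product.2 ⟨Finset.mem_univ _,
            Finset.mem_image.2 ⟨b, hb, rfl⟩⟩, rfl⟩), rfl⟩
      have htop := (adjoin_eq_top_iff ρ χ μ f hf hThom).2 hTtop
      exact ⟨T, htop⟩
  · intro 𝒜 _ hstab
    set S : Set A := {a | a ∈ 𝒜 1 ∧ ∃ g, a ∈ actionGrading ρ χ g} with hSdef
    have hS : ∀ a ∈ S, ∃ g, a ∈ actionGrading ρ χ g := fun a ha => ha.2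
    have hspan : Submodule.span k S = 𝒜 1 := by
      apply le_antisymm
      · rw [Submodule.span_le]; exact fun a ha => ha.1
      · intro a ha
        have heq : a = ∑ g : G, component ρ χ g a := (sum_component ρ χ hchar a).symm
        rw [heq]
        exact Submodule.sum_mem _ fun g _ => Submodule.subset_span
          ⟨component_mem_submodule ρ χ (fun h => hstab h 1 a ha) g, g, component_mem ρ χ g a⟩
    have e1 : Algebra.adjoin k ((𝒜 1 : Submodule k A) : Set A) = Algebra.adjoin k S := by
      rw [← hspan, Algebra.adjoin_span]
    have e2 : Algebra.adjoin k (((𝒜 1).map (f : A →ₗ[k] B) : Submodule k B) : Set B)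
        = Algebra.adjoin k (⇑f '' S) := by
      rw [← hspan, Submodule.map_span, Algebra.adjoin_span, LinearEquiv.coe_coe]
    rw [e1, e2]
    exact adjoin_eq_top_iff ρ χ μ f hf hS
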